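/- If a simplicial complex K contains two leaves sharing a common vertex (i.e., there are edges ab and ac with b and c having degree 1), then the Morse complex M(K) is strongly collapsible. -/

import Mathlib

open Finset

/-- An abstract simplicial complex on vertex type `V`. -/
structure SComplex (V : Type*) where
  faces : Finset V → Prop
  not_empty : ¬ faces ∅
  down_closed : ∀ {σ τ : Finset V}, faces τ → σ ⊆ τ → σ.Nonempty → faces σ

/-- The complex generated by a set of simplices (downward closure). -/
def ofGens {V : Type*} (gens : Set (Finset V)) : SComplex V where
  faces σ := σ.Nonempty ∧ ∃ τ ∈ gens, σ ⊆ τ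
  not_empty h := by simpa using h.1
  down_closed := by
    rintro σ τ ⟨-, τ', hτ', hsub'⟩ hsub hne
    exact ⟨hne, τ', hτ', hsub.trans hsub'⟩

/-- A primitive (gradient) vector field on `K`: a single regular pair `(σ, τ)`
with `σ` a codimension-one face of `τ`. -/
structure VPair {V : Type*} (K : SComplex V) where
  lo : Finset V
  hi : Finset V
  lo_face : K.faces lo
  hi_face : K.faces hi
  lo_sub : lo ⊆ hi
  card_eq : hi.card = lo.card + 1

noncomputable instance {V : Type*} (K : SComplex V) : DecidableEq (VPair K) :=
  Classical.decEq _

/-- Two primitive pairs share no simplex. -/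
def VPair.Compatible {V : Type*} {K : SComplex V} (p q : VPair K) : Prop :=
  p.lo ≠ q.lo ∧ p.lo ≠ q.hi ∧ p.hi ≠ q.lo ∧ p.hi ≠ q.hi

/-- A discrete vector field: each simplex occurs in at most one pair. -/
def IsDVF {V : Type*} {K : SComplex V} (W : Set (VPair K)) : Prop :=
  ∀ p ∈ W, ∀ q ∈ W, p ≠ q → VPair.Compatible p q

/-- Existence of a nontrivial closed `V`-path. -/
def HasClosedPath {V : Type*} {K : SComplex V} (W : Set (VPair K)) : Prop :=
  ∃ k : ℕ, 0 < k ∧ ∃ c : ZMod k → VPair K, (∀ i, c i ∈ W) ∧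
    ∀ i, (c (i + 1)).lo ⊆ (c i).hi ∧ (c (i + 1)).lo ≠ (c i).lo ∧
      (c (i + 1)).lo.card + 1 = (c i).hi.card

/-- A gradient vector field: a discrete vector field with no nontrivial closed path. -/
def IsGVF {V : Type*} {K : SComplex V} (W : Set (VPair K)) : Prop :=
  IsDVF W ∧ ¬ HasClosedPath W

/-- The Morse complex of `K`: vertices are primitive gradient vector fields,
simplices are gradient vector fields. -/
def MorseComplex {V : Type*} (K : SComplex V) : SComplex (VPair K) where
  faces S := S.Nonempty ∧ IsGVF {p | p ∈ S}
  not_empty h := by simpa using h.1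
  down_closed := by
    rintro σ τ ⟨hne', hdvf, hnc⟩ hsub hne
    refine ⟨hne, fun p hp q hq hpq => hdvf p (hsub hp) q (hsub hq) hpq, fun h => hnc ?_⟩
    obtain ⟨k, hk, c, hc, hpath⟩ := h
    exact ⟨k, hk, c, fun i => hsub (hc i), hpath⟩

/-- The pure Morse complex: the subcomplex of `MorseComplex K` generated by the
facets of maximum dimension (maximum gradient vector fields). -/
def pureMorse {V : Type*} (K : SComplex V) : SComplex (VPair K) where
  faces S := (MorseComplex K).faces S ∧ ∃ T : Finset (VPair K), S ⊆ T ∧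
      (MorseComplex K).faces T ∧
      ∀ T' : Finset (VPair K), (MorseComplex K).faces T' → T'.card ≤ T.card
  not_empty h := (MorseComplex K).not_empty h.1
  down_closed := by
    rintro σ τ ⟨hτ, T, hsub', hT, hmax⟩ hsub hne
    exact ⟨(MorseComplex K).down_closed hτ hsub hne, T, hsub.trans hsub', hT, hmax⟩

/-- `σ` is a facet (maximal simplex) of `K`. -/
def IsFacet {V : Type*} (K : SComplex V) (σ : Finset V) : Prop :=
  K.faces σ ∧ ∀ τ, K.faces τ → σ ⊆ τ → σ = τ

/-- `w` dominates `w'`: every facet containing `w'` contains `w`. -/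
def Dominates {V : Type*} (K : SComplex V) (w w' : V) : Prop :=
  ∀ σ, IsFacet K σ → w' ∈ σ → w ∈ σ

/-- `K` is minimal: no vertex dominates another vertex. -/
def MinimalComplex {V : Type*} (K : SComplex V) : Prop :=
  ∀ w w' : V, K.faces {w} → K.faces {w'} → w ≠ w' → ¬ Dominates K w w'

/-- Strong collapsibility of a face predicate: a sequence of removals of
dominated vertices reaching a single point. -/
inductive SCAux {V : Type*} : (Finset V → Prop) → Prop
  | point (F : Finset V → Prop) (v : V) (h : ∀ σ, F σ ↔ σ = {v}) : SCAux F
  | step (F : Finset V → Prop) (w w' : V) (hne : w ≠ w') (hw : F {w}) (hw' : F {w'})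
      (hdom : ∀ σ, (F σ ∧ ∀ τ, F τ → σ ⊆ τ → σ = τ) → w' ∈ σ → w ∈ σ)
      (h : SCAux (fun σ => F σ ∧ w' ∉ σ)) : SCAux F

def StronglyCollapsible {V : Type*} (K : SComplex V) : Prop := SCAux K.faces

/-- `F` strongly collapses to `G` by a sequence of removals of dominated vertices. -/
inductive SCTo {V : Type*} : (Finset V → Prop) → (Finset V → Prop) → Prop
  | refl (F : Finset V → Prop) : SCTo F F
  | step (F G : Finset V → Prop) (w w' : V) (hne : w ≠ w') (hw : F {w}) (hw' : F {w'})
      (hdom : ∀ σ, (F σ ∧ ∀ τ, F τ → σ ⊆ τ → σ = τ) → w' ∈ σ → w ∈ σ)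
      (h : SCTo (fun σ => F σ ∧ w' ∉ σ) G) : SCTo F G

/-- Collapsibility (Forman): removal of free pairs down to a point. -/
inductive CollAux {V : Type*} : (Finset V → Prop) → Prop
  | point (F : Finset V → Prop) (v : V) (h : ∀ σ, F σ ↔ σ = {v}) : CollAux F
  | step (F : Finset V → Prop) (σ τ : Finset V) (hστ : σ ⊂ τ) (hσ : F σ) (hτ : F τ)
      (hfree : ∀ ρ, F ρ → σ ⊂ ρ → ρ = τ)
      (h : CollAux (fun ρ => F ρ ∧ ρ ≠ σ ∧ ρ ≠ τ)) : CollAux F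

def Collapsible {V : Type*} (K : SComplex V) : Prop := CollAux K.faces

/-- The degree of a vertex: the number of edges of `K` containing it. -/
noncomputable def sdeg {V : Type*} (K : SComplex V) (x : V) : ℕ :=
  Set.ncard {σ : Finset V | K.faces σ ∧ σ.card = 2 ∧ x ∈ σ}

/-- Image of a finset, with a classical decidability instance. -/
noncomputable def fimage {V W : Type*} (f : V → W) (σ : Finset V) : Finset W :=
  haveI := Classical.decEq W
  σ.image f

/-- An isomorphism between two simplicial complexes given by face predicates. -/
structure ComplexIso {V W : Type*} (F : Finset V → Prop) (G : Finset W → Prop) where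
  toFun : V → W
  invFun : W → V
  left_inv : ∀ x, F {x} → invFun (toFun x) = x
  right_inv : ∀ y, G {y} → toFun (invFun y) = y
  map_face : ∀ σ, F σ → G (fimage toFun σ)
  inv_face : ∀ τ, G τ → F (fimage invFun τ)

/-- The join of two simplicial complexes. -/
def sJoin {V W : Type*} [DecidableEq V] [DecidableEq W] (K : SComplex V) (L : SComplex W) :
    SComplex (V ⊕ W) :=
  ofGens {σ | ∃ α β, (K.faces α ∨ α = ∅) ∧ (L.faces β ∨ β = ∅) ∧
    σ = α.image Sum.inl ∪ β.image Sum.inr}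

/-- The disjoint union of two simplicial complexes. -/
def sDisjUnion {V W : Type*} [DecidableEq V] [DecidableEq W] (K : SComplex V) (L : SComplex W) :
    SComplex (V ⊕ W) :=
  ofGens ({σ | ∃ α, K.faces α ∧ σ = α.image Sum.inl} ∪
          {σ | ∃ β, L.faces β ∧ σ = β.image Sum.inr})

/-- The simplicial complex of a simple graph (vertices and edges). -/
def graphComplex {V : Type*} [DecidableEq V] (G : SimpleGraph V) : SComplex V :=
  ofGens ({σ | ∃ x, σ = {x}} ∪ {σ | ∃ x y, G.Adj x y ∧ σ = ({x, y} : Finset V)})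

/-- Attach a leaf (pendant edge) to `K` at the vertex `x`. -/
def attachLeaf {V : Type*} [DecidableEq V] (K : SComplex V) (x : V) : SComplex (V ⊕ Unit) :=
  ofGens ({σ | ∃ α, K.faces α ∧ σ = α.image Sum.inl} ∪
          {({Sum.inl x, Sum.inr ()} : Finset (V ⊕ Unit))})

/-- The cycle graph on `ZMod n`. -/
def cycleGraph (n : ℕ) : SimpleGraph (ZMod n) :=
  SimpleGraph.fromRel (fun i j => j = i + 1)

/-- Attach one new leaf to every vertex of a graph. -/
def addLeaves {V : Type*} [DecidableEq V] (G : SimpleGraph V) : SComplex (V ⊕ V) :=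
  ofGens ({σ | ∃ x y, G.Adj x y ∧ σ = ({Sum.inl x, Sum.inl y} : Finset (V ⊕ V))} ∪
          {σ | ∃ u, σ = ({Sum.inl u, Sum.inr u} : Finset (V ⊕ V))})

/-- The geometric realization of `K`, inside `V → ℝ`. -/
def realization {V : Type*} (K : SComplex V) : Set (V → ℝ) :=
  {f | ∃ σ, K.faces σ ∧ (∀ x, 0 ≤ f x) ∧ (∀ x, f x ≠ 0 → x ∈ σ) ∧ ∑ x ∈ σ, f x = 1}

/-- A Hasse-diagram edge of a poset: a covering pair. -/
structure HEdge (P : Type*) [PartialOrder P] where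
  lo : P
  hi : P
  cov : lo ⋖ hi

noncomputable instance {P : Type*} [PartialOrder P] : DecidableEq (HEdge P) :=
  Classical.decEq _

def HEdge.Compat {P : Type*} [PartialOrder P] (p q : HEdge P) : Prop :=
  p.lo ≠ q.lo ∧ p.lo ≠ q.hi ∧ p.hi ≠ q.lo ∧ p.hi ≠ q.hi

def HasPosetCycle {P : Type*} [PartialOrder P] (W : Set (HEdge P)) : Prop :=
  ∃ k : ℕ, 0 < k ∧ ∃ c : ZMod k → HEdge P, (∀ i, c i ∈ W) ∧
    ∀ i, (c (i + 1)).lo ⋖ (c i).hi ∧ (c (i + 1)).lo ≠ (c i).lo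

/-- The generalized Morse complex `f(P)` of a poset: simplices are acyclic
matchings of the Hasse diagram of `P`. -/
def genMorse (P : Type*) [PartialOrder P] : SComplex (HEdge P) where
  faces S := S.Nonempty ∧ (∀ p ∈ S, ∀ q ∈ S, p ≠ q → HEdge.Compat p q) ∧
    ¬ HasPosetCycle {p | p ∈ S}
  not_empty h := by simpa using h.1
  down_closed := by
    rintro σ τ ⟨-, hm, hc⟩ hsub hne
    refine ⟨hne, fun p hp q hq h => hm p (hsub hp) q (hsub hq) h, fun h => hc ?_⟩
    obtain ⟨k, hk, c, hc', hp⟩ := h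
    exact ⟨k, hk, c, fun i => hsub (hc' i), hp⟩

/-- The automorphism group of a simplicial complex, as a subgroup of `Perm V`. -/
def autGroup {V : Type*} [DecidableEq V] (K : SComplex V) : Subgroup (Equiv.Perm V) where
  carrier := {e | ∀ σ : Finset V, K.faces σ ↔ K.faces (σ.image e)}
  one_mem' := by intro σ; simp
  mul_mem' := by
    intro a b ha hb σ
    rw [hb σ, ha (σ.image b)]
    simp [Finset.image_image, Equiv.Perm.coe_mul]
  inv_mem' := by
    intro a ha σ
    have := ha (σ.image ⇑a⁻¹)
    simpa [Finset.image_image, Function.comp_def,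
      Finset.image_id'] using this.symm

/-- The full subcomplex of `K` on a set `S` of vertices. -/
def restrictTo {V : Type*} (K : SComplex V) (S : Set V) : Finset V → Prop :=
  fun σ => K.faces σ ∧ ∀ x ∈ σ, x ∈ S

/-- `S` spans a fully connected subcomplex: `K = (K∣S) * (K∣Sᶜ)`. -/
def FullyConnected {V : Type*} [DecidableEq V] (K : SComplex V) (S : Set V) : Prop :=
  ∀ σ : Finset V, K.faces σ ↔ (σ.Nonempty ∧ ∃ α β : Finset V,
    (restrictTo K S α ∨ α = ∅) ∧ ((K.faces β ∧ ∀ x ∈ β, x ∉ S) ∨ β = ∅) ∧ σ = α ∪ β)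

/-- The primitive pair `(x, xy)` on an edge `{x,y}`. -/
def edgePair {V : Type*} [DecidableEq V] (K : SComplex V) (x y : V) (hxy : x ≠ y)
    (h : K.faces {x, y}) : VPair K where
  lo := {x}
  hi := {x, y}
  lo_face := K.down_closed h (by simp) (Finset.singleton_nonempty x)
  hi_face := h
  lo_sub := by simp
  card_eq := by
    rw [Finset.card_singleton, Finset.card_insert_of_notMem (by simp [hxy]),
      Finset.card_singleton]
/-! Write `ab` for the edge of the leaf `b` and `ac` for that of `c`. A gradient vector field
not containing the pair `(a, ab)` stays gradient when the pair `(b, ab)` is added, because no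
other pair meets `b`. Since `(a, ab)` and `(a, ac)` share the simplex `a`, every facet of `M(K)`
containing `(a, ab)` omits `(a, ac)` and hence contains `(c, ac)`: so `(a, ab)` is dominated and
can be removed, after which `(b, ab)` dominates `(a, ac)` in the same way. What remains is a cone
with apex `(b, ab)`, which collapses strongly to its apex. -/

namespace SComplex

variable {V : Type*} (K : SComplex V)

def deleteVertex (w : V) : SComplex V where
  faces σ := K.faces σ ∧ w ∉ σ
  not_empty h := K.not_empty h.1
  down_closed hτ hsub hne := ⟨K.down_closed hτ.1 hsub hne, fun h => hτ.2 (hsub h)⟩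

@[simp]
theorem deleteVertex_faces {w : V} {σ : Finset V} :
    (K.deleteVertex w).faces σ ↔ K.faces σ ∧ w ∉ σ :=
  Iff.rfl

variable {K} [DecidableEq V]

theorem dominates_of_insert {w w' : V}
    (hins : ∀ σ, K.faces σ → w' ∈ σ → K.faces (insert w σ)) : Dominates K w w' := by
  rintro σ ⟨hσ, hmax⟩ hw'
  rw [hmax _ (hins σ hσ hw') (subset_insert w σ)]
  exact mem_insert_self w σ

end SComplex

section StronglyCollapsible

variable {V : Type*} [DecidableEq V] {K : SComplex V}

theorem StronglyCollapsible.of_deleteVertex {w w' : V} (hne : w ≠ w') (hw : K.faces {w})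
    (hw' : K.faces {w'}) (hins : ∀ σ, K.faces σ → w' ∈ σ → K.faces (insert w σ))
    (h : StronglyCollapsible (K.deleteVertex w')) : StronglyCollapsible K :=
  .step K.faces w w' hne hw hw' (K.dominates_of_insert hins) h

theorem StronglyCollapsible.of_cone [Finite V] {p : V} (hp : K.faces {p})
    (hcone : ∀ σ, K.faces σ → K.faces (insert p σ)) : StronglyCollapsible K := by
  induction hn : {x | K.faces {x}}.ncard using Nat.strong_induction_on generalizing K with
  | _ n ih =>
  by_cases hapex : ∀ x, K.faces {x} → x = p
  · refine .point K.faces p fun σ => ⟨fun hσ => ?_, fun h => h ▸ hp⟩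
    have hall : ∀ x ∈ σ, x = p := fun x hx =>
      hapex x (K.down_closed hσ (singleton_subset_iff.2 hx) (singleton_nonempty x))
    obtain ⟨x, hx⟩ := nonempty_iff_ne_empty.2 fun h => K.not_empty (h ▸ hσ)
    exact eq_singleton_iff_unique_mem.2 ⟨hall x hx ▸ hx, hall⟩
  push Not at hapex
  obtain ⟨w', hw', hw'p⟩ := hapex
  refine .of_deleteVertex hw'p.symm hp hw' (fun σ hσ _ => hcone σ hσ) <|
    ih _ ?_ (by simpa using And.intro hp hw'p)
      (fun σ hσ => by simpa [hw'p] using And.intro (hcone σ hσ.1) hσ.2) rfl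
  have hvert : {x | (K.deleteVertex w').faces {x}} = {x | K.faces {x}} \ {w'} := by
    ext x; simp [eq_comm]
  rw [hvert, ← hn]
  exact Set.ncard_sdiff_singleton_lt_of_mem hw'

end StronglyCollapsible

section Morse

variable {V : Type*} {K : SComplex V}

theorem VPair.ext {p q : VPair K} (hlo : p.lo = q.lo) (hhi : p.hi = q.hi) : p = q := by
  cases p; cases q; cases hlo; cases hhi; rfl

instance [Finite V] : Finite (VPair K) :=
  .of_injective (fun p : VPair K => (p.lo, p.hi)) fun _ _ h =>
    VPair.ext (congrArg Prod.fst h) (congrArg Prod.snd h)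

theorem MorseComplex.faces_singleton (p : VPair K) : (MorseComplex K).faces {p} := by
  refine ⟨singleton_nonempty p, fun q hq r hr hqr => ?_, ?_⟩
  · exact absurd ((mem_singleton.1 hq).trans (mem_singleton.1 hr).symm) hqr
  · rintro ⟨k, -, c, hmem, hpath⟩
    have hc : ∀ i, c i = p := fun i => mem_singleton.1 (hmem i)
    exact (hpath 0).2.1 (by rw [hc, hc])

theorem MorseComplex.eq_of_lo_eq {σ : Finset (VPair K)} (hσ : (MorseComplex K).faces σ)
    {p q : VPair K} (hp : p ∈ σ) (hq : q ∈ σ) (hlo : p.lo = q.lo) : p = q := by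
  by_contra hpq
  exact (hσ.2.1 p hp q hq hpq).1 hlo

theorem IsGVF.insert {S : Set (VPair K)} {p : VPair K} (hS : IsGVF S)
    (hp : ∀ q ∈ S, p.lo ⊆ q.hi → q = p) : IsGVF (insert p S) := by
  have compat : ∀ q ∈ S, q ≠ p → VPair.Compatible p q := fun q hq hqp => by
    have hlo : ¬ p.lo ⊆ q.hi := fun h => hqp (hp q hq h)
    refine ⟨?_, ?_, ?_, ?_⟩ <;> rintro h <;> apply hlo
    exacts [h ▸ q.lo_sub, h ▸ subset_rfl, p.lo_sub.trans (h ▸ q.lo_sub), h ▸ p.lo_sub]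
  refine ⟨fun q hq r hr hqr => ?_, ?_⟩
  · rcases hq with rfl | hq <;> rcases hr with rfl | hr
    · exact absurd rfl hqr
    · exact compat r hr (Ne.symm hqr)
    · obtain ⟨h1, h2, h3, h4⟩ := compat q hq hqr
      exact ⟨h1.symm, h3.symm, h2.symm, h4.symm⟩
    · exact hS.1 q hq r hr hqr
  rintro ⟨k, hk, c, hmem, hpath⟩
  by_cases hS' : ∀ i, c i ∈ S
  · exact hS.2 ⟨k, hk, c, hS', hpath⟩
  push Not at hS'
  obtain ⟨i, hi⟩ := hS'
  have hci : c i = p := (hmem i).resolve_right hi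
  -- the pair before `p` on the path has `p.lo` in its upper simplex, so it is `p` again
  have hstep := hpath (i - 1)
  rw [sub_add_cancel, hci] at hstep
  have hprev : c (i - 1) = p := (hmem (i - 1)).elim id fun h => hp _ h hstep.1
  exact hstep.2.1 (by rw [hprev])

end Morse

section Leaf

variable {V : Type*} [DecidableEq V] {K : SComplex V} {a b : V}

theorem subset_pair_of_sdeg_eq_one (hab : a ≠ b) (hfab : K.faces {a, b}) (hb : sdeg K b = 1)
    {σ : Finset V} (hσ : K.faces σ) (hbσ : b ∈ σ) : σ ⊆ {a, b} := by
  obtain ⟨τ, hτ⟩ := Set.ncard_eq_one.mp hb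
  have edge_eq : ∀ x, x ≠ b → K.faces {x, b} → ({x, b} : Finset V) = τ := by
    intro x hxb hx
    have : ({x, b} : Finset V) ∈ {σ : Finset V | K.faces σ ∧ σ.card = 2 ∧ b ∈ σ} :=
      ⟨hx, card_pair hxb, by simp⟩
    simpa [hτ] using this
  intro x hx
  by_cases hxb : x = b
  · simp [hxb]
  have hfxb : K.faces {x, b} :=
    K.down_closed hσ (by simp [insert_subset_iff, hx, hbσ]) (insert_nonempty _ _)
  rw [← (edge_eq x hxb hfxb).trans (edge_eq a hab hfab).symm]
  exact mem_insert_self x {b}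

theorem eq_edgePair_of_sdeg_eq_one (hab : a ≠ b) (hfab : K.faces {a, b}) (hb : sdeg K b = 1)
    (p : VPair K) (hbp : b ∈ p.hi) :
    p = edgePair K a b hab hfab ∨ p = edgePair K b a hab.symm (pair_comm a b ▸ hfab) := by
  have hhi : p.hi = {a, b} := by
    refine eq_of_subset_of_card_le (subset_pair_of_sdeg_eq_one hab hfab hb p.hi_face hbp) ?_
    have := card_pos.2 (p.lo.nonempty_iff_ne_empty.2 fun h => K.not_empty (h ▸ p.lo_face))
    rw [card_pair hab, p.card_eq]
    omega
  have hlo : p.lo.card = 1 := by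
    have := p.card_eq
    rw [hhi, card_pair hab] at this
    omega
  obtain ⟨x, hx⟩ := card_eq_one.1 hlo
  have hxab : x ∈ ({a, b} : Finset V) := hhi ▸ p.lo_sub (hx ▸ mem_singleton_self x)
  rcases mem_insert.1 hxab with rfl | hxb
  · exact .inl (VPair.ext hx hhi)
  · rw [mem_singleton.1 hxb] at hx
    exact .inr (VPair.ext hx (hhi.trans (pair_comm a b)))

theorem MorseComplex.faces_insert_leaf (hab : a ≠ b) (hfab : K.faces {a, b})
    (hb : sdeg K b = 1) {σ : Finset (VPair K)} (hσ : (MorseComplex K).faces σ)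
    (hab_notMem : edgePair K a b hab hfab ∉ σ) :
    (MorseComplex K).faces (insert (edgePair K b a hab.symm (pair_comm a b ▸ hfab)) σ) := by
  refine ⟨insert_nonempty _ _, ?_⟩
  rw [show {p | p ∈ insert _ σ} = _ from coe_insert _ σ]
  refine hσ.2.insert fun q hq hbq => ?_
  rcases eq_edgePair_of_sdeg_eq_one hab hfab hb q (hbq (mem_singleton_self b)) with rfl | rfl
  · exact absurd hq hab_notMem
  · rfl

end Leaf

/-- if `K` contains two leaves sharing a common vertex, then
`M(K)` is strongly collapsible. -/
theorem stmt_3 {V : Type*} [Fintype V] [DecidableEq V] (K : SComplex V) (a b c : V)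
    (hab : a ≠ b) (hac : a ≠ c) (hbc : b ≠ c)
    (hfab : K.faces {a, b}) (hfac : K.faces {a, c})
    (hb : sdeg K b = 1) (hc : sdeg K c = 1) :
    StronglyCollapsible (MorseComplex K) := by
  set M := MorseComplex K
  set ab := edgePair K a b hab hfab
  set ac := edgePair K a c hac hfac
  set ba := edgePair K b a hab.symm (pair_comm a b ▸ hfab)
  set ca := edgePair K c a hac.symm (pair_comm a c ▸ hfac)
  have hab_ac : ab ≠ ac := fun h => by
    simpa [ab, ac, edgePair, hab.symm, hbc] using congrArg (b ∈ ·.hi) h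
  have hab_ba : ab ≠ ba := fun h => hab (singleton_injective (congrArg VPair.lo h))
  have hac_ba : ac ≠ ba := fun h => hab (singleton_injective (congrArg VPair.lo h))
  have hca_ab : ca ≠ ab := fun h => hac.symm (singleton_injective (congrArg VPair.lo h))
  refine .of_deleteVertex hca_ab (MorseComplex.faces_singleton ca)
    (MorseComplex.faces_singleton ab) (fun σ hσ habσ =>
      MorseComplex.faces_insert_leaf hac hfac hc hσ fun hacσ =>
        hab_ac (MorseComplex.eq_of_lo_eq hσ habσ hacσ rfl)) ?_
  have hinsert (σ) (hσ : (M.deleteVertex ab).faces σ) :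
      (M.deleteVertex ab).faces (insert ba σ) := by
    simpa [hab_ba, hσ.2] using MorseComplex.faces_insert_leaf hab hfab hb hσ.1 hσ.2
  refine .of_deleteVertex hac_ba.symm (by simpa [hab_ba] using MorseComplex.faces_singleton ba)
    (by simpa [hab_ac] using MorseComplex.faces_singleton ac) (fun σ hσ _ => hinsert σ hσ) ?_
  refine .of_cone (p := ba) (by simpa [hab_ba, hac_ba] using MorseComplex.faces_singleton ba)
    fun σ hσ => ?_
  simpa [hac_ba] using And.intro (hinsert σ hσ.1) hσ.2
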